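/- Let ζ : ℝ → ℝ be a continuous even function with compact support contained in [−R, R] (R > 0), bounded by M := sup_ℝ |ζ|, satisfying the moment conditions of order 2: for every y ∈ ℝ, ∑_{ξ∈ℤ} ζ(ξ − y)(ξ − y)^j equals 1 if j = 0 and equals 0 if j = 1, 2. Let a < b, let f : ℝ → ℝ be three times continuously differentiable, and let v : ℝ → ℝ be continuously differentiable with v(x₀) = 0 for some x₀ ∈ [a, b]. Then |∫_a^b v(x)·(f(x) − ∑_{ξ∈ℤ} ζ(x − ξ) f(ξ)) dx| ≤ C · (b − a)^{3/2} · sup_{y ∈ [a−R, b+R]} |f‴(y)| · (∫_a^b |v′(x)|² dx)^{1/2}, where C depends only on R and M. -/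

import Mathlib

/-!
Write `Qf(x) = ∑_ξ ζ(x - ξ) f(ξ)`. Only the lattice points `ξ` with `|ξ - x| ≤ R` contribute, and
there are at most `2R + 1` of them. By the moment conditions (and evenness of `ζ`) the weights
`ζ(x - ξ)` reproduce polynomials of degree `≤ 2` around `x`, so `f(x) - Qf(x)` is the weighted sum
of the Taylor remainders `f(ξ) - T₂f(x; ξ)`, each at most `sup |f‴| R³ / 6`. Hence
`|f - Qf| ≤ (2R + 1) M R³ sup |f‴| / 6` pointwise on `[a, b]`. On the other side, `v(x₀) = 0` and
Cauchy–Schwarz give `|v| ≤ (b - a)^{1/2} ‖v'‖_{L²(a,b)}`, and integrating the product over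
`[a, b]` contributes the last factor `b - a`.
-/

open MeasureTheory Set Finset
open scoped Nat

theorem integral_abs_le_sqrt_mul_sqrt_integral_sq {α : Type*} [MeasurableSpace α]
    {μ : Measure α} [IsFiniteMeasure μ] {g : α → ℝ} (hg : MemLp g 2 μ) :
    ∫ x, |g x| ∂μ ≤ √(μ.real univ) * √(∫ x, |g x| ^ 2 ∂μ) := by
  have := integral_mul_le_Lp_mul_Lq_of_nonneg Real.HolderConjugate.two_two
    (f := fun x => |g x|) (g := fun _ => 1) (ae_of_all _ fun _ => abs_nonneg _)
    (ae_of_all _ fun _ => zero_le_one) (by simpa [← Pi.abs_def] using hg.abs)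
    (by simpa using memLp_const 1)
  simpa [Real.sqrt_eq_rpow, mul_comm] using this

theorem intervalIntegral_abs_le_sqrt_mul_sqrt {g : ℝ → ℝ} (hg : Continuous g) {a b : ℝ}
    (hab : a ≤ b) :
    ∫ x in a..b, |g x| ≤ √(b - a) * √(∫ x in a..b, |g x| ^ 2) := by
  have hL2 : MemLp g 2 (volume.restrict (Ioc a b)) :=
    (memLp_two_iff_integrable_sq hg.aestronglyMeasurable).2 (hg.pow 2).integrableOn_Ioc
  simpa [intervalIntegral.integral_of_le hab, hab] using
    integral_abs_le_sqrt_mul_sqrt_integral_sq hL2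

theorem abs_le_sqrt_mul_sqrt_integral_deriv_sq {v : ℝ → ℝ} (hv : ContDiff ℝ 1 v) {a b x₀ x : ℝ}
    (hx₀ : x₀ ∈ Icc a b) (hv₀ : v x₀ = 0) (hx : x ∈ Icc a b) :
    |v x| ≤ √(b - a) * √(∫ t in a..b, |deriv v t| ^ 2) := by
  have hv' : Continuous (deriv v) := hv.continuous_deriv le_rfl
  have hftc : v x = ∫ t in x₀..x, deriv v t := by
    rw [intervalIntegral.integral_deriv_eq_sub (fun t _ => hv.differentiable one_ne_zero t)
      (hv'.intervalIntegrable _ _), hv₀, sub_zero]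
  calc |v x| ≤ |(∫ t in x₀..x, |deriv v t|)| := by
        simpa only [hftc, Real.norm_eq_abs] using
          intervalIntegral.norm_integral_le_abs_integral_norm (f := deriv v) (a := x₀) (b := x)
    _ ≤ |(∫ t in a..b, |deriv v t|)| := by
        refine intervalIntegral.abs_integral_mono_interval ?_
          (ae_of_all _ fun _ => abs_nonneg _) (hv'.abs.intervalIntegrable _ _)
        exact uIoc_subset_uIoc_of_uIcc_subset_uIcc
          (uIcc_subset_uIcc (Icc_subset_uIcc hx₀) (Icc_subset_uIcc hx))
    _ = ∫ t in a..b, |deriv v t| :=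
        abs_of_nonneg (intervalIntegral.integral_nonneg (hx₀.1.trans hx₀.2) fun _ _ => abs_nonneg _)
    _ ≤ _ := intervalIntegral_abs_le_sqrt_mul_sqrt hv' (hx₀.1.trans hx₀.2)

theorem abs_sub_taylor_le {f : ℝ → ℝ} {n : ℕ} (hf : ContDiff ℝ (n + 1) f) {x t B : ℝ}
    (hB : ∀ y ∈ uIcc x t, |iteratedDeriv (n + 1) f y| ≤ B) :
    |f t - ∑ k ∈ range (n + 1), iteratedDeriv k f x / k ! * (t - x) ^ k|
      ≤ B * |t - x| ^ (n + 1) / (n + 1)! := by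
  rcases eq_or_ne x t with rfl | hxt
  · simp [Finset.sum_range_succ']
  obtain ⟨y, hy, hrem⟩ := taylor_mean_remainder_lagrange_iteratedDeriv hxt hf.contDiffOn
  have htaylor : taylorWithinEval f n (uIcc x t) x t =
      ∑ k ∈ range (n + 1), iteratedDeriv k f x / k ! * (t - x) ^ k := by
    rw [taylor_within_apply]
    refine Finset.sum_congr rfl fun k hk => ?_
    rw [iteratedDerivWithin_eq_iteratedDeriv (uniqueDiffOn_uIcc hxt)
      (hf.contDiffAt.of_le (by exact_mod_cast (Finset.mem_range.1 hk).le)) left_mem_uIcc,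
      smul_eq_mul]
    ring
  rw [← htaylor, hrem, abs_div, abs_mul, abs_pow, Nat.abs_cast]
  gcongr
  exact hB y (uIoo_subset_uIcc_self hy)

theorem sum_mul_sum_pow_eq_of_moments {ι : Type*} (s : Finset ι) (w p : ι → ℝ) (x : ℝ) {n : ℕ}
    (hmom : ∀ j ≤ n, ∑ i ∈ s, w i * (p i - x) ^ j = if j = 0 then 1 else 0) (c : ℕ → ℝ) :
    ∑ i ∈ s, w i * ∑ k ∈ range (n + 1), c k * (p i - x) ^ k = c 0 := by
  calc ∑ i ∈ s, w i * ∑ k ∈ range (n + 1), c k * (p i - x) ^ k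
      = ∑ k ∈ range (n + 1), c k * ∑ i ∈ s, w i * (p i - x) ^ k := by
        simp_rw [Finset.mul_sum]
        rw [Finset.sum_comm]
        refine Finset.sum_congr rfl fun _ _ => Finset.sum_congr rfl fun _ _ => by ring
    _ = c 0 := by
        rw [Finset.sum_congr rfl fun k hk =>
          by rw [hmom k (Nat.lt_succ_iff.1 (Finset.mem_range.1 hk))]]
        simp

theorem Int.mem_Icc_ceil_floor {a b : ℝ} {ξ : ℤ} : ξ ∈ Finset.Icc ⌈a⌉ ⌊b⌋ ↔ (ξ : ℝ) ∈ Icc a b := by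
  simp [Int.ceil_le, Int.le_floor]

theorem Int.card_Icc_ceil_floor_le {a b : ℝ} (hab : a ≤ b) :
    (#(Finset.Icc ⌈a⌉ ⌊b⌋) : ℝ) ≤ b - a + 1 := by
  have hcard : (#(Finset.Icc ⌈a⌉ ⌊b⌋) : ℝ) = max ((⌊b⌋ + 1 - ⌈a⌉ : ℤ) : ℝ) 0 := by
    rw [Int.card_Icc, ← Int.cast_natCast, Int.toNat_eq_max]; push_cast; rfl
  rw [hcard]
  refine max_le ?_ (by linarith)
  push_cast
  linarith [Int.floor_le b, Int.le_ceil a]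

theorem tsum_int_eq_sum_Icc_ceil_floor {g : ℝ → ℝ} {a b : ℝ} (hg : ∀ t ∉ Icc a b, g t = 0) :
    ∑' ξ : ℤ, g ξ = ∑ ξ ∈ Finset.Icc ⌈a⌉ ⌊b⌋, g ξ :=
  tsum_eq_sum fun _ hξ => hg _ (mt Int.mem_Icc_ceil_floor.2 hξ)

theorem abs_sub_quasiInterpolant_le {ζ : ℝ → ℝ} {R M : ℝ} {n : ℕ} (hR : 0 ≤ R)
    (heven : ∀ x, ζ (-x) = ζ x) (hsupp : ∀ x, x ∉ Icc (-R) R → ζ x = 0) (hM : ∀ x, |ζ x| ≤ M)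
    (hmom : ∀ (y : ℝ) (j : ℕ), j ≤ n →
      ∑' ξ : ℤ, ζ (ξ - y) * (ξ - y) ^ j = if j = 0 then 1 else 0)
    {f : ℝ → ℝ} (hf : ContDiff ℝ (n + 1) f) {x B : ℝ}
    (hB : ∀ y ∈ Icc (x - R) (x + R), |iteratedDeriv (n + 1) f y| ≤ B) :
    |f x - ∑' ξ : ℤ, ζ (x - ξ) * f ξ| ≤ (2 * R + 1) * M * (B * R ^ (n + 1) / (n + 1)!) := by
  set s := Finset.Icc ⌈x - R⌉ ⌊x + R⌋
  have hmem : ∀ ξ ∈ s, (ξ : ℝ) ∈ Icc (x - R) (x + R) := fun ξ => Int.mem_Icc_ceil_floor.1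
  have hzero : ∀ t ∉ Icc (x - R) (x + R), ζ (x - t) = 0 := fun t ht =>
    hsupp _ fun h => ht ⟨by linarith [h.2], by linarith [h.1]⟩
  have hflip : ∀ t, ζ (t - x) = ζ (x - t) := fun t => by rw [← neg_sub, heven]
  have hmom_s : ∀ j ≤ n, ∑ ξ ∈ s, ζ (x - ξ) * ((ξ : ℝ) - x) ^ j = if j = 0 then 1 else 0 := by
    intro j hj
    rw [← hmom x j hj, tsum_int_eq_sum_Icc_ceil_floor (g := fun t => ζ (t - x) * (t - x) ^ j)
      fun t ht => by rw [hflip, hzero t ht, zero_mul]]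
    simp only [hflip, s]
  set P : ℝ → ℝ := fun t => ∑ k ∈ range (n + 1), iteratedDeriv k f x / k ! * (t - x) ^ k
  have hP : ∑ ξ ∈ s, ζ (x - ξ) * P ξ = f x := by
    simpa using sum_mul_sum_pow_eq_of_moments s (fun ξ => ζ (x - ξ)) (fun ξ => ξ) x hmom_s
      (fun k => iteratedDeriv k f x / k !)
  have hM0 : 0 ≤ M := (abs_nonneg _).trans (hM 0)
  have hB0 : 0 ≤ B := (abs_nonneg _).trans (hB x ⟨by linarith, by linarith⟩)
  have hterm : ∀ ξ ∈ s, |ζ (x - ξ) * (P ξ - f ξ)| ≤ M * (B * R ^ (n + 1) / (n + 1)!) := by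
    intro ξ hξ
    have hdist : |(ξ : ℝ) - x| ≤ R :=
      abs_sub_le_iff.2 ⟨by linarith [(hmem ξ hξ).2], by linarith [(hmem ξ hξ).1]⟩
    have htaylor := abs_sub_taylor_le hf (x := x) fun y hy =>
      hB y (uIcc_subset_Icc ⟨by linarith, by linarith⟩ (hmem ξ hξ) hy)
    rw [abs_mul, abs_sub_comm]
    gcongr
    · exact hM _
    · exact htaylor.trans (by gcongr)
  calc |f x - ∑' ξ : ℤ, ζ (x - ξ) * f ξ| = |∑ ξ ∈ s, ζ (x - ξ) * (P ξ - f ξ)| := by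
        rw [tsum_int_eq_sum_Icc_ceil_floor (g := fun t => ζ (x - t) * f t)
          fun t ht => by rw [hzero t ht, zero_mul], ← hP, ← Finset.sum_sub_distrib]
        simp only [mul_sub]
    _ ≤ ∑ ξ ∈ s, |ζ (x - ξ) * (P ξ - f ξ)| := Finset.abs_sum_le_sum_abs _ _
    _ ≤ #s * (M * (B * R ^ (n + 1) / (n + 1)!)) := by
        simpa using Finset.sum_le_sum hterm
    _ ≤ (2 * R + 1) * M * (B * R ^ (n + 1) / (n + 1)!) := by
        rw [mul_assoc]
        gcongr
        linarith [Int.card_Icc_ceil_floor_le (show x - R ≤ x + R by linarith)]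

/-- Consistency error of the external energy (Lemma 4.3):
the error of the lattice pairing via the quasi-interpolant is controlled
by `(b−a)^{3/2} · sup|f‴| · ‖v′‖_{L²}`, with a constant depending only on
`R` and `M`. -/
theorem stmt_8 (R : ℝ) (hR : 0 < R) (M : ℝ) :
    ∃ C > 0, ∀ (ζ : ℝ → ℝ), Continuous ζ → (∀ x, ζ (-x) = ζ x) →
      (∀ x, x ∉ Set.Icc (-R) R → ζ x = 0) → (∀ x, |ζ x| ≤ M) →
      (∀ (y : ℝ) (j : ℕ), j ≤ 2 →
        ∑' ξ : ℤ, ζ ((ξ : ℝ) - y) * ((ξ : ℝ) - y) ^ j = if j = 0 then 1 else 0) →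
      ∀ (a b : ℝ), a < b → ∀ (f : ℝ → ℝ), ContDiff ℝ 3 f →
      ∀ (v : ℝ → ℝ), ContDiff ℝ 1 v → (∃ x₀ ∈ Set.Icc a b, v x₀ = 0) →
      ∀ (B : ℝ), (∀ y ∈ Set.Icc (a - R) (b + R), |iteratedDeriv 3 f y| ≤ B) →
      |∫ x in a..b, v x * (f x - ∑' ξ : ℤ, ζ (x - (ξ : ℝ)) * f (ξ : ℝ))|
        ≤ C * (b - a) ^ ((3:ℝ)/2) * B * Real.sqrt (∫ x in a..b, |deriv v x| ^ 2) := by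
  refine ⟨(2 * R + 1) * (|M| + 1) * R ^ 3, by positivity, ?_⟩
  intro ζ _ heven hsupp hM hmom a b hab f hf v hv ⟨x₀, hx₀, hv₀⟩ B hB
  set S := √(∫ x in a..b, |deriv v x| ^ 2)
  have hpoint : ∀ x ∈ uIoc a b, ‖v x * (f x - ∑' ξ : ℤ, ζ (x - ξ) * f ξ)‖
      ≤ (√(b - a) * S) * ((2 * R + 1) * M * (B * R ^ 3 / 6)) := by
    intro x hx
    have hx' : x ∈ Icc a b := Ioc_subset_Icc_self (uIoc_of_le hab.le ▸ hx)
    rw [Real.norm_eq_abs, abs_mul]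
    gcongr
    · exact abs_le_sqrt_mul_sqrt_integral_deriv_sq hv hx₀ hv₀ hx'
    · exact abs_sub_quasiInterpolant_le (n := 2) hR.le heven hsupp hM hmom hf fun y hy =>
        hB y (Icc_subset_Icc (by linarith [hx'.1]) (by linarith [hx'.2]) hy)
  have hB0 : 0 ≤ B := (abs_nonneg _).trans (hB a ⟨by linarith, by linarith⟩)
  have hconst : (2 * R + 1) * M * R ^ 3 / 6 ≤ (2 * R + 1) * (|M| + 1) * R ^ 3 := by
    have : M / 6 ≤ |M| + 1 := by linarith [le_abs_self M, abs_nonneg M]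
    calc (2 * R + 1) * M * R ^ 3 / 6 = ((2 * R + 1) * R ^ 3) * (M / 6) := by ring
      _ ≤ ((2 * R + 1) * R ^ 3) * (|M| + 1) := by gcongr
      _ = _ := by ring
  have hpow : (b - a) ^ ((3 : ℝ) / 2) = (b - a) * √(b - a) := by
    rw [show (3 : ℝ) / 2 = 1 + 1 / 2 by norm_num, Real.rpow_add (sub_pos.2 hab), Real.rpow_one,
      Real.sqrt_eq_rpow]
  calc _ ≤ (√(b - a) * S) * ((2 * R + 1) * M * (B * R ^ 3 / 6)) * |b - a| :=
        intervalIntegral.norm_integral_le_of_norm_le_const hpoint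
    _ = (2 * R + 1) * M * R ^ 3 / 6 * ((b - a) * √(b - a) * B * S) := by
        rw [abs_of_pos (sub_pos.2 hab)]; ring
    _ ≤ (2 * R + 1) * (|M| + 1) * R ^ 3 * ((b - a) * √(b - a) * B * S) := by
        gcongr
    _ = _ := by rw [hpow]; ring
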